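/- For every finite group G and every positive even integer N, the quantum double ground state Ω on the N × N square-lattice torus satisfies Λ_max(Ω)² = |G|^{−(N²−1)}; that is, its geometric entanglement of spins (each edge being one party) is E_G(Ω) = α·|V| − log₂|G|, where α = log₂|G| and |V| = N² is the number of vertices. -/

import Mathlib

/-!
Λ_max(Ω) = |S|^{-1/2}. The product state concentrated on the trivial configuration attains this
value. Conversely, for a product state with factors φ_e one has
|⟨Φ, Ω⟩| ≤ |S|^{-1/2} ∑_{x ∈ S} ∏_e a_e(x_e) with a_e = |φ_e|. The edges split into a spanning
cycle T and its complement, the transpose of T; both connect the lattice, so a pure-gauge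
configuration is determined by its values on T, and also by its values on Tᶜ. Hence
∑_{x ∈ S} ∏_{e ∈ T} a_e(x_e)² ≤ ∏_{e ∈ T} ∑_g a_e(g)² = 1, likewise for Tᶜ, and Cauchy–Schwarz
bounds ∑_{x ∈ S} ∏_e a_e(x_e) by 1. Finally |S| = |G|^{N²-1} because f ↦ (df, f 0) is a
bijection from G^V onto S × G.
-/

open scoped BigOperators
open scoped Classical

noncomputable section

namespace GeomEnt

/-- The ℓ² inner product of amplitude functions on qudits indexed by `ι` with local
configuration alphabet `A`. -/
def qInner {ι A : Type} [Fintype ι] [Fintype A] (φ ψ : (ι → A) → ℂ) : ℂ :=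
  ∑ x : ι → A, (starRingEnd ℂ) (φ x) * ψ x

/-- A product state: each site carries a unit-norm local amplitude function. -/
def IsProductState {ι A : Type} [Fintype ι] [Fintype A] (Φ : (ι → A) → ℂ) : Prop :=
  ∃ φ : ι → A → ℂ,
    (∀ i, ∑ g : A, ‖φ i g‖ ^ 2 = 1) ∧
    ∀ x, Φ x = ∏ i, φ i (x i)

def LambdaMax {ι A : Type} [Fintype ι] [Fintype A] (ψ : (ι → A) → ℂ) : ℝ :=
  sSup { r : ℝ | ∃ Φ, IsProductState Φ ∧ r = ‖qInner Φ ψ‖ }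

def EG {ι A : Type} [Fintype ι] [Fintype A] (ψ : (ι → A) → ℂ) : ℝ :=
  - Real.logb 2 (LambdaMax ψ ^ 2)

/-- The pure-gauge configurations of the quantum double model on the N × N torus:
edges (v,0) point from v to v+(1,0) and edges (v,1) from v to v+(0,1). -/
def Spure (G : Type) [Group G] (N : ℕ) : Set ((ZMod N × ZMod N) × Fin 2 → G) :=
  { x | ∃ f : ZMod N × ZMod N → G,
      ∀ v : ZMod N × ZMod N,
        x (v, 0) = f (v + (1, 0)) * (f v)⁻¹ ∧ x (v, 1) = f (v + (0, 1)) * (f v)⁻¹ }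

/-- The quantum double ground state: uniform superposition over pure-gauge
configurations. -/
def Omega (G : Type) [Group G] (N : ℕ) [NeZero N] :
    ((ZMod N × ZMod N) × Fin 2 → G) → ℂ :=
  fun x => if x ∈ Spure G N then (((Real.sqrt (Nat.card (Spure G N)))⁻¹ : ℝ) : ℂ) else 0

theorem mul_inv_eq_mul_inv_iff_inv_mul_eq_inv_mul {G : Type*} [Group G] {a b c d : G} :
    a * b⁻¹ = c * d⁻¹ ↔ c⁻¹ * a = d⁻¹ * b := by
  rw [mul_inv_eq_iff_eq_mul, mul_assoc, ← inv_mul_eq_iff_eq_mul]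

theorem ZMod.apply_eq_apply_of_apply_add_one {X : Type*} {N : ℕ} [NeZero N] (g : ZMod N → X)
    (a : ZMod N) (h : ∀ k, k ≠ a → g (k + 1) = g k) (k l : ZMod N) : g k = g l := by
  have hwalk : ∀ n : ℕ, n < N → g (a + 1 + n) = g (a + 1) := by
    intro n
    induction n with
    | zero => simp
    | succ n ih =>
      intro hn
      have hne : a + 1 + n ≠ a := by
        intro h0
        have : ((n + 1 : ℕ) : ZMod N) = 0 := by push_cast; linear_combination h0
        rw [ZMod.natCast_eq_zero_iff] at this
        exact absurd (Nat.le_of_dvd n.succ_pos this) (not_le.2 hn)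
      rw [Nat.cast_succ, ← add_assoc, h _ hne, ih (by omega)]
  have hreach : ∀ k, g k = g (a + 1) := fun k => by
    simpa using hwalk (k - (a + 1)).val (ZMod.val_lt _)
  rw [hreach k, hreach l]

theorem sum_prod_restrict_le_prod_sum {ι A : Type*} [Fintype A]
    {S : Finset (ι → A)} {T : Set ι} [Fintype T] (hT : Set.InjOn T.domRestrict (S : Set (ι → A)))
    (c : ι → A → ℝ) (hc : ∀ i a, 0 ≤ c i a) :
    ∑ x ∈ S, ∏ i : T, c i (x i) ≤ ∏ i : T, ∑ a, c i a := by
  calc ∑ x ∈ S, ∏ i : T, c i (x i)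
      = ∑ y ∈ S.image T.domRestrict, ∏ i : T, c i (y i) := by
        rw [Finset.sum_image hT]; rfl
    _ ≤ ∑ y : T → A, ∏ i : T, c i (y i) :=
        Finset.sum_le_univ_sum_of_nonneg fun y => Finset.prod_nonneg fun i _ => hc i (y i)
    _ = ∏ i : T, ∑ a, c i a := (Fintype.prod_sum fun (i : T) a => c i a).symm

theorem sum_prod_le_one_of_injOn_domRestrict {ι A : Type*} [Fintype ι] [Fintype A]
    {S : Finset (ι → A)} {T : Set ι} (hT : Set.InjOn T.domRestrict (S : Set (ι → A)))
    (hTc : Set.InjOn Tᶜ.domRestrict (S : Set (ι → A))) (a : ι → A → ℝ)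
    (ha : ∀ i, ∑ g, a i g ^ 2 = 1) :
    ∑ x ∈ S, ∏ i, a i (x i) ≤ 1 := by
  have hsq : ∀ (U : Set ι) [Fintype U], Set.InjOn U.domRestrict (S : Set (ι → A)) →
      ∑ x ∈ S, (∏ i : U, a i (x i)) ^ 2 ≤ 1 := fun U _ hU => by
    calc ∑ x ∈ S, (∏ i : U, a i (x i)) ^ 2 = ∑ x ∈ S, ∏ i : U, a i (x i) ^ 2 := by
          simp only [Finset.prod_pow]
      _ ≤ ∏ i : U, ∑ g, a i g ^ 2 :=
          sum_prod_restrict_le_prod_sum hU (fun i g => a i g ^ 2) fun _ _ => sq_nonneg _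
      _ = 1 := by simp only [ha, Finset.prod_const_one]
  have hsplit : ∀ x : ι → A,
      ∏ i, a i (x i) = (∏ i : T, a i (x i)) * ∏ i : ↑Tᶜ, a i (x i) := fun x =>
    (Fintype.prod_subtype_mul_prod_subtype (· ∈ T) fun i => a i (x i)).symm
  rw [Finset.sum_congr rfl fun x _ => hsplit x]
  have hcs := Finset.sum_mul_sq_le_sq_mul_sq S (fun x => ∏ i : T, a i (x i))
    (fun x => ∏ i : ↑Tᶜ, a i (x i))
  have hle : (∑ x ∈ S, (∏ i : T, a i (x i)) * ∏ i : ↑Tᶜ, a i (x i)) ^ 2 ≤ 1 :=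
    hcs.trans (mul_le_one₀ (hsq T hT) (Finset.sum_nonneg fun _ _ => sq_nonneg _) (hsq Tᶜ hTc))
  exact (le_abs_self _).trans ((sq_le_one_iff_abs_le_one _).1 hle)

theorem isProductState_ite_eq {ι A : Type} [Fintype ι] [Fintype A] (x₀ : ι → A) :
    IsProductState fun x => if x = x₀ then (1 : ℂ) else 0 := by
  refine ⟨fun i g => if g = x₀ i then 1 else 0, fun i => by simp [apply_ite], fun x => ?_⟩
  simp only [Fintype.prod_boole, funext_iff]

theorem qInner_ite_eq {ι A : Type} [Fintype ι] [Fintype A] (x₀ : ι → A) (ψ : (ι → A) → ℂ) :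
    qInner (fun x => if x = x₀ then (1 : ℂ) else 0) ψ = ψ x₀ := by
  simp [qInner]

theorem lambdaMax_eq_of_forall_le {ι A : Type} [Fintype ι] [Fintype A] {ψ : (ι → A) → ℂ}
    {r : ℝ} (hle : ∀ Φ, IsProductState Φ → ‖qInner Φ ψ‖ ≤ r) (x₀ : ι → A)
    (hx₀ : ‖ψ x₀‖ = r) : LambdaMax ψ = r :=
  IsGreatest.csSup_eq ⟨⟨_, isProductState_ite_eq x₀, by rw [qInner_ite_eq, hx₀]⟩,
    fun _ ⟨Φ, hΦ, hr⟩ => hr ▸ hle Φ hΦ⟩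

theorem norm_qInner_le_of_injOn_domRestrict {ι A : Type} [Fintype ι] [Fintype A]
    {S : Finset (ι → A)} {T : Set ι} (hT : Set.InjOn T.domRestrict (S : Set (ι → A)))
    (hTc : Set.InjOn Tᶜ.domRestrict (S : Set (ι → A))) {ψ : (ι → A) → ℂ} {r : ℝ} (hr : 0 ≤ r)
    (hψS : ∀ x ∉ S, ψ x = 0) (hψr : ∀ x, ‖ψ x‖ ≤ r) {Φ : (ι → A) → ℂ}
    (hΦ : IsProductState Φ) : ‖qInner Φ ψ‖ ≤ r := by
  obtain ⟨φ, hφ, hΦ⟩ := hΦ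
  calc ‖qInner Φ ψ‖ ≤ ∑ x, ‖starRingEnd ℂ (Φ x) * ψ x‖ := norm_sum_le _ _
    _ = ∑ x ∈ S, ‖starRingEnd ℂ (Φ x) * ψ x‖ :=
        (Finset.sum_subset (Finset.subset_univ S) fun x _ hx => by simp [hψS x hx]).symm
    _ ≤ ∑ x ∈ S, (∏ i, ‖φ i (x i)‖) * r := Finset.sum_le_sum fun x _ => by
        rw [norm_mul, Complex.norm_conj, hΦ x, norm_prod]
        exact mul_le_mul_of_nonneg_left (hψr x) (by positivity)
    _ = (∑ x ∈ S, ∏ i, ‖φ i (x i)‖) * r := (Finset.sum_mul _ _ _).symm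
    _ ≤ 1 * r := mul_le_mul_of_nonneg_right (sum_prod_le_one_of_injOn_domRestrict hT hTc _ hφ) hr
    _ = r := one_mul r

section Lattice

variable {N : ℕ} {G : Type} [Group G]

def edgeHead (e : (ZMod N × ZMod N) × Fin 2) : ZMod N × ZMod N :=
  e.1 + if e.2 = 0 then (1, 0) else (0, 1)

def coboundary (f : ZMod N × ZMod N → G) : (ZMod N × ZMod N) × Fin 2 → G :=
  fun e => f (edgeHead e) * (f e.1)⁻¹

theorem Spure_eq_range_coboundary : Spure G N = Set.range (coboundary (N := N)) := by
  ext x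
  refine exists_congr fun f => ⟨fun h => funext fun e => ?_, fun h v => ?_⟩
  · obtain ⟨v, d⟩ := e
    fin_cases d
    exacts [(h v).1.symm, (h v).2.symm]
  · exact ⟨(congrFun h (v, 0)).symm, (congrFun h (v, 1)).symm⟩

theorem one_mem_Spure : (1 : (ZMod N × ZMod N) × Fin 2 → G) ∈ Spure G N :=
  ⟨fun _ => 1, fun _ => by simp⟩

theorem coboundary_apply_eq_iff {f f' : ZMod N × ZMod N → G} {e : (ZMod N × ZMod N) × Fin 2} :
    coboundary f e = coboundary f' e ↔
      (f' (edgeHead e))⁻¹ * f (edgeHead e) = (f' e.1)⁻¹ * f e.1 :=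
  mul_inv_eq_mul_inv_iff_inv_mul_eq_inv_mul

theorem coboundary_mul_const (f : ZMod N × ZMod N → G) (g : G) :
    coboundary (fun v => f v * g) = coboundary f :=
  funext fun e => by simp [coboundary, mul_assoc]

theorem injOn_domRestrict_Spure {E : Set ((ZMod N × ZMod N) × Fin 2)}
    (hE : ∀ c : ZMod N × ZMod N → G, (∀ e ∈ E, c (edgeHead e) = c e.1) → ∀ p q, c p = c q) :
    Set.InjOn E.domRestrict (Spure G N) := by
  rw [Spure_eq_range_coboundary]
  rintro _ ⟨f, rfl⟩ _ ⟨f', rfl⟩ h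
  have hc := hE (fun v => (f' v)⁻¹ * f v) fun e he =>
    coboundary_apply_eq_iff.1 (congrFun h ⟨e, he⟩)
  exact funext fun e => coboundary_apply_eq_iff.2 (hc _ _)

/-- Row `j` is traversed horizontally from the antidiagonal `i + j = 0` to the antidiagonal
`i + j = -1`, where the cycle steps up to row `j + 1`. Transposing the lattice maps the
complementary edges onto this cycle. -/
def spanningCycle (N : ℕ) : Set ((ZMod N × ZMod N) × Fin 2) :=
  {e | e.2 = if e.1.1 + e.1.2 + 1 = 0 then 1 else 0}

variable [NeZero N]

theorem apply_eq_of_forall_mem_spanningCycle {X : Type*} (c : ZMod N × ZMod N → X)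
    (h : ∀ e ∈ spanningCycle N, c (edgeHead e) = c e.1) (p q : ZMod N × ZMod N) :
    c p = c q := by
  have hrow : ∀ j i i', c (i, j) = c (i', j) := fun j =>
    ZMod.apply_eq_apply_of_apply_add_one (fun i => c (i, j)) (-j - 1) fun i hi => by
      have hij : i + j + 1 ≠ 0 := fun h0 => hi (by linear_combination h0)
      simpa [edgeHead] using h ((i, j), 0) (by simp [spanningCycle, hij])
  have hcol : ∀ j j', c (-j - 1, j) = c (-j' - 1, j') :=
    ZMod.apply_eq_apply_of_apply_add_one (fun j => c (-j - 1, j)) 0 fun j _ =>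
      calc c (-(j + 1) - 1, j + 1) = c (-j - 1, j + 1) := hrow _ _ _
        _ = c (-j - 1, j) := by
          simpa [edgeHead] using h ((-j - 1, j), 1) (by simp [spanningCycle]; ring)
  calc c p = c (-p.2 - 1, p.2) := hrow _ _ _
    _ = c (-q.2 - 1, q.2) := hcol _ _
    _ = c q := hrow _ _ _

theorem apply_eq_of_forall_notMem_spanningCycle {X : Type*} (c : ZMod N × ZMod N → X)
    (h : ∀ e ∉ spanningCycle N, c (edgeHead e) = c e.1) (p q : ZMod N × ZMod N) :
    c p = c q := by
  have hswap :=
    apply_eq_of_forall_mem_spanningCycle (c ∘ Prod.swap) (fun e he => ?_) p.swap q.swap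
  · simpa using hswap
  obtain ⟨⟨i, j⟩, d⟩ := e
  fin_cases d
  · have hji : j + i + 1 ≠ 0 := by simpa [spanningCycle, add_comm i j] using he
    simpa [edgeHead] using h ((j, i), 1) (by simp [spanningCycle, hji])
  · have hji : j + i + 1 = 0 := by simpa [spanningCycle, add_comm i j] using he
    simpa [edgeHead] using h ((j, i), 0) (by simp [spanningCycle, hji])

end Lattice

section GroundState

variable {N : ℕ} [NeZero N] {G : Type} [Group G] [Fintype G]

theorem card_Spure_mul_card :
    Nat.card (Spure G N) * Fintype.card G = Fintype.card G ^ N ^ 2 := by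
  rw [Spure_eq_range_coboundary]
  let F : (ZMod N × ZMod N → G) → Set.range (coboundary (N := N)) × G :=
    fun f => (⟨coboundary f, f, rfl⟩, f 0)
  have hF : Function.Bijective F := by
    refine ⟨fun f f' h => ?_, fun ⟨⟨_, f, rfl⟩, g⟩ => ⟨fun v => f v * ((f 0)⁻¹ * g), ?_⟩⟩
    · simp only [F, Prod.mk.injEq] at h
      have hc := apply_eq_of_forall_mem_spanningCycle (fun v => (f' v)⁻¹ * f v) fun e _ =>
        coboundary_apply_eq_iff.1 (congrFun (congrArg Subtype.val h.1) e)
      funext v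
      simpa [h.2, inv_mul_eq_one, eq_comm] using hc v 0
    · simp [F, coboundary_mul_const]
  rw [← Nat.card_eq_fintype_card, ← Nat.card_prod, ← Nat.card_congr (Equiv.ofBijective F hF),
    Nat.card_eq_fintype_card, Fintype.card_fun, Fintype.card_prod, ZMod.card, sq,
    Nat.card_eq_fintype_card]

theorem card_Spure : Nat.card (Spure G N) = Fintype.card G ^ (N ^ 2 - 1) := by
  have h := card_Spure_mul_card (N := N) (G := G)
  rw [← Nat.sub_add_cancel (Nat.one_le_pow 2 N (NeZero.pos N)), pow_succ] at h
  exact Nat.eq_of_mul_eq_mul_right Fintype.card_pos h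

theorem lambdaMax_Omega : LambdaMax (Omega G N) = (Real.sqrt (Nat.card (Spure G N)))⁻¹ := by
  have hinj : ∀ E : Set ((ZMod N × ZMod N) × Fin 2),
      (∀ c : ZMod N × ZMod N → G, (∀ e ∈ E, c (edgeHead e) = c e.1) → ∀ p q, c p = c q) →
      Set.InjOn E.domRestrict (↑(Spure G N).toFinset : Set ((ZMod N × ZMod N) × Fin 2 → G)) :=
    fun E hE => by
      rw [Set.coe_toFinset]
      exact injOn_domRestrict_Spure hE
  refine lambdaMax_eq_of_forall_le (fun Φ hΦ => ?_) 1 (by simp [Omega, one_mem_Spure])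
  refine norm_qInner_le_of_injOn_domRestrict
    (hinj _ apply_eq_of_forall_mem_spanningCycle) (hinj _ apply_eq_of_forall_notMem_spanningCycle)
    (by positivity) (fun x hx => ?_) (fun x => ?_) hΦ
  · exact if_neg (Set.mem_toFinset.not.1 hx)
  · unfold Omega
    split_ifs
    · rw [Complex.norm_real, Real.norm_of_nonneg (by positivity)]
    · rw [norm_zero]
      positivity

end GroundState

theorem quantum_double_GE_general
    (G : Type) [Group G] [Fintype G] (N : ℕ) [NeZero N] :
    LambdaMax (Omega G N) ^ 2 = ((Fintype.card G : ℝ) ^ (N ^ 2 - 1))⁻¹ ∧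
    EG (Omega G N) = ((N : ℝ) ^ 2) * Real.logb 2 (Fintype.card G) -
      Real.logb 2 (Fintype.card G) := by
  have hsq : LambdaMax (Omega G N) ^ 2 = ((Fintype.card G : ℝ) ^ (N ^ 2 - 1))⁻¹ := by
    rw [lambdaMax_Omega, inv_pow, Real.sq_sqrt (Nat.cast_nonneg _), card_Spure, Nat.cast_pow]
  refine ⟨hsq, ?_⟩
  rw [EG, hsq, Real.logb_inv, neg_neg, Real.logb_pow,
    Nat.cast_sub (Nat.one_le_pow 2 N (NeZero.pos N))]
  push_cast
  ring

/-- for every finite group G and positive even N, the quantum double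
ground state on the N × N torus has Λ_max² = |G|^{−(N²−1)}, i.e. geometric
entanglement of spins E_G = α·|V| − log₂|G| with α = log₂|G| and |V| = N². -/
theorem quantum_double_GE
    (G : Type) [Group G] [Fintype G] (N : ℕ) [NeZero N] (hpos : 0 < N)
    (heven : Even N) :
    LambdaMax (Omega G N) ^ 2 = ((Fintype.card G : ℝ) ^ (N ^ 2 - 1))⁻¹ ∧
    EG (Omega G N) = ((N : ℝ) ^ 2) * Real.logb 2 (Fintype.card G) -
      Real.logb 2 (Fintype.card G) :=
  quantum_double_GE_general G N

end GeomEnt
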